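/- arXiv:1406.5695 — 2 statements merged into one kernel-verified Lean document; each statement's English description precedes it below -/
import Mathlib

section
/- For 0 < q < 1 and 0 ≤ a < 1, let G_{aq^n} be independent geometric random variables with P(G_p = k) = (1-p)p^k for k ∈ ℕ. Then the sum S = Σ_{n=0}^∞ G_{aq^n} is almost surely finite, and the random variable R = (1-q)^{-1} q^S satisfies P(R = (1-q)^{-1} q^n) = a^n (a;q)_∞ / (q;q)_n for all n ∈ ℕ, where (x;q)_m = Π_{j=0}^{m-1}(1 - x q^j) and (x;q)_∞ = Π_{j=0}^∞ (1 - x q^j). -/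
/-!
By independence, the law of `S_N = ∑_{n<N} G_{aq^n}` is the convolution of the law of `S_{N-1}`
with a geometric law; the q-binomial identity `∑_{i+k=m} x^k (x;q)_i/(q;q)_i = (xq;q)_m/(q;q)_m`
then gives by induction `P(S_N = m) = a^m (a;q)_N (q^N;q)_m / (q;q)_m`. Since
`∑ P(G_{aq^n} ≠ 0) ≤ ∑ a q^n < ∞`, Borel–Cantelli makes almost every path of `(G_{aq^n})` vanish
eventually, so `S_N` is eventually equal to `S` and `P(S_N = m) → P(S = m)`, while
`(a;q)_N → (a;q)_∞` and `(q^N;q)_m → 1`. Finally `x ↦ (1-q)⁻¹ q^x` is injective.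
-/

open MeasureTheory ProbabilityTheory

/-- The finite q-Pochhammer symbol `(x;q)_n = ∏_{j=0}^{n-1} (1 - x q^j)`. -/
noncomputable def qPoch (x q : ℝ) (n : ℕ) : ℝ := ∏ j ∈ Finset.range n, (1 - x * q ^ j)

/-- The infinite q-Pochhammer symbol `(x;q)_∞ = ∏_{j=0}^∞ (1 - x q^j)`. -/
noncomputable def qPochInf (x q : ℝ) : ℝ := ∏' j : ℕ, (1 - x * q ^ j)

open Filter Finset Topology

lemma qPoch_zero (x q : ℝ) : qPoch x q 0 = 1 := by simp [qPoch]

lemma qPoch_succ (x q : ℝ) (n : ℕ) : qPoch x q (n + 1) = qPoch x q n * (1 - x * q ^ n) :=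
  prod_range_succ _ n

lemma qPoch_succ' (x q : ℝ) (n : ℕ) : qPoch x q (n + 1) = (1 - x) * qPoch (x * q) q n := by
  simp only [qPoch, prod_range_succ', pow_succ, pow_zero, mul_one, mul_assoc, mul_comm]

lemma qPoch_one_left_succ (q : ℝ) (n : ℕ) : qPoch 1 q (n + 1) = 0 := by
  simp [qPoch_succ']

lemma qPoch_zero_left (q : ℝ) (n : ℕ) : qPoch 0 q n = 1 := by simp [qPoch]

lemma qPoch_pos {x q : ℝ} (hx0 : 0 ≤ x) (hx1 : x < 1) (hq0 : 0 ≤ q) (hq1 : q ≤ 1) (n : ℕ) :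
    0 < qPoch x q n :=
  prod_pos fun _ _ =>
    sub_pos.2 <| (mul_le_of_le_one_right hx0 (pow_le_one₀ hq0 hq1)).trans_lt hx1

lemma qPoch_nonneg {x q : ℝ} (hx0 : 0 ≤ x) (hx1 : x ≤ 1) (hq0 : 0 ≤ q) (hq1 : q ≤ 1) (n : ℕ) :
    0 ≤ qPoch x q n :=
  prod_nonneg fun _ _ =>
    sub_nonneg.2 <| (mul_le_of_le_one_right hx0 (pow_le_one₀ hq0 hq1)).trans hx1

lemma sum_antidiagonal_pow_mul_qPoch_div {x q : ℝ} {m : ℕ} (hq : qPoch q q m ≠ 0) :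
    ∑ p ∈ antidiagonal m, x ^ p.2 * (qPoch x q p.1 / qPoch q q p.1)
      = qPoch (x * q) q m / qPoch q q m := by
  induction m with
  | zero => simp [qPoch_zero]
  | succ m ih =>
    rw [qPoch_succ] at hq
    have hqm : qPoch q q m ≠ 0 := left_ne_zero_of_mul hq
    have hqm' : 1 - q * q ^ m ≠ 0 := right_ne_zero_of_mul hq
    simp only [Nat.sum_antidiagonal_succ', pow_zero, one_mul, pow_succ', mul_assoc, ← mul_sum,
      ih hqm, qPoch_succ q q m, qPoch_succ (x * q) q m, qPoch_succ' x q m]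
    field_simp
    ring

lemma tendsto_qPoch_qPochInf (x : ℝ) {q : ℝ} (hq : |q| < 1) :
    Tendsto (qPoch x q) atTop (𝓝 (qPochInf x q)) := by
  have hsum : Summable fun j => -(x * q ^ j) :=
    ((summable_geometric_of_abs_lt_one hq).mul_left x).neg
  unfold qPoch qPochInf
  simpa only [← sub_eq_add_neg] using
    (Real.multipliable_one_add_of_summable hsum).hasProd.tendsto_prod_nat

lemma tendsto_qPoch_pow_left (m : ℕ) {q : ℝ} (hq : |q| < 1) :
    Tendsto (fun N => qPoch (q ^ N) q m) atTop (𝓝 1) := by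
  have hcont : Continuous fun x => qPoch x q m := by unfold qPoch; fun_prop
  rw [← qPoch_zero_left q m]
  exact (hcont.tendsto 0).comp (tendsto_pow_atTop_nhds_zero_of_abs_lt_one hq)

noncomputable def qNegBinomialMass (a q : ℝ) (N m : ℕ) : ℝ :=
  a ^ m * qPoch a q N * qPoch (q ^ N) q m / qPoch q q m

lemma qNegBinomialMass_nonneg {a q : ℝ} (ha0 : 0 ≤ a) (ha1 : a ≤ 1) (hq0 : 0 ≤ q) (hq1 : q ≤ 1)
    (N m : ℕ) : 0 ≤ qNegBinomialMass a q N m :=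
  div_nonneg (mul_nonneg (mul_nonneg (pow_nonneg ha0 m) (qPoch_nonneg ha0 ha1 hq0 hq1 N))
    (qPoch_nonneg (pow_nonneg hq0 N) (pow_le_one₀ hq0 hq1) hq0 hq1 m))
    (qPoch_nonneg hq0 hq1 hq0 hq1 m)

lemma qNegBinomialMass_zero_left (a q : ℝ) (m : ℕ) :
    qNegBinomialMass a q 0 m = if m = 0 then 1 else 0 := by
  cases m <;> simp [qNegBinomialMass, qPoch_zero, qPoch_one_left_succ]

lemma sum_antidiagonal_qNegBinomialMass_mul {a q : ℝ} {m : ℕ} (hq : qPoch q q m ≠ 0) (N : ℕ) :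
    ∑ p ∈ antidiagonal m, qNegBinomialMass a q N p.1 * ((1 - a * q ^ N) * (a * q ^ N) ^ p.2)
      = qNegBinomialMass a q (N + 1) m := by
  rw [qNegBinomialMass, pow_succ, mul_div_assoc, ← sum_antidiagonal_pow_mul_qPoch_div hq,
    mul_sum, qPoch_succ]
  refine sum_congr rfl fun p hp => ?_
  rw [qNegBinomialMass, ← mem_antidiagonal.1 hp]
  ring

lemma tendsto_qNegBinomialMass (a : ℝ) {q : ℝ} (hq : |q| < 1) (m : ℕ) :
    Tendsto (fun N => qNegBinomialMass a q N m) atTop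
      (𝓝 (a ^ m * qPochInf a q / qPoch q q m)) := by
  simpa only [qNegBinomialMass, mul_one] using
    ((tendsto_const_nhds.mul (tendsto_qPoch_qPochInf a hq)).mul
      (tendsto_qPoch_pow_left m hq)).div_const (qPoch q q m)

lemma eventually_hasSum_sum_range {M : Type*} [AddCommMonoid M] [TopologicalSpace M]
    {f : ℕ → M} (hf : ∀ᶠ n in atTop, f n = 0) :
    ∀ᶠ N in atTop, HasSum f (∑ n ∈ range N, f n) := by
  obtain ⟨N₀, hN₀⟩ := eventually_atTop.1 hf
  filter_upwards [eventually_ge_atTop N₀] with N hN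
  exact hasSum_sum_of_ne_finset_zero fun n hn => hN₀ n (by simp at hn; omega)

section Probability

variable {Ω : Type*} [MeasurableSpace Ω] {μ : Measure Ω}

lemma measure_add_eq_sum_antidiagonal {X Y : Ω → ℕ} (hX : Measurable X) (hY : Measurable Y)
    (hXY : IndepFun X Y μ) (m : ℕ) :
    μ {ω | X ω + Y ω = m} = ∑ p ∈ antidiagonal m, μ {ω | X ω = p.1} * μ {ω | Y ω = p.2} := by
  have hunion : {ω | X ω + Y ω = m}
      = ⋃ (p : ℕ × ℕ) (_ : p ∈ antidiagonal m), X ⁻¹' {p.1} ∩ Y ⁻¹' {p.2} := by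
    ext ω; simp
  have hdisj : Set.PairwiseDisjoint (antidiagonal m : Set (ℕ × ℕ))
      fun p => X ⁻¹' {p.1} ∩ Y ⁻¹' {p.2} := by
    rintro p - p' - hpp'
    refine Set.disjoint_left.2 fun ω hω hω' => hpp' (Prod.ext ?_ ?_)
    · exact hω.1.symm.trans hω'.1
    · exact hω.2.symm.trans hω'.2
  rw [hunion, measure_biUnion_finset hdisj fun p _ =>
    (hX (measurableSet_singleton _)).inter (hY (measurableSet_singleton _))]
  exact sum_congr rfl fun p _ =>
    hXY.measure_inter_preimage_eq_mul _ _ (measurableSet_singleton _) (measurableSet_singleton _)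

lemma measure_sum_range_eq_qNegBinomialMass [IsProbabilityMeasure μ] {q a : ℝ}
    (hq0 : 0 ≤ q) (hq1 : q < 1) (ha0 : 0 ≤ a) (ha1 : a ≤ 1)
    {G : ℕ → Ω → ℕ} (hmeas : ∀ n, Measurable (G n)) (hindep : iIndepFun G μ)
    (hdist : ∀ n k, μ {ω | G n ω = k} = ENNReal.ofReal ((1 - a * q ^ n) * (a * q ^ n) ^ k))
    (N m : ℕ) :
    μ {ω | ∑ n ∈ range N, G n ω = m} = ENNReal.ofReal (qNegBinomialMass a q N m) := by
  induction N generalizing m with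
  | zero => cases m <;> simp [qNegBinomialMass_zero_left]
  | succ N ih =>
    have hstep_nonneg : ∀ k, 0 ≤ (1 - a * q ^ N) * (a * q ^ N) ^ k := fun k =>
      mul_nonneg (sub_nonneg.2 (mul_le_one₀ ha1 (by positivity) (pow_le_one₀ hq0 hq1.le)))
        (by positivity)
    have hind : IndepFun (fun ω => ∑ n ∈ range N, G n ω) (G N) μ := by
      simpa only [sum_fn] using hindep.indepFun_sum_range_succ hmeas N
    simp only [sum_range_succ]
    rw [measure_add_eq_sum_antidiagonal (measurable_sum _ fun n _ => hmeas n) (hmeas N) hind,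
      ← sum_antidiagonal_qNegBinomialMass_mul (qPoch_pos hq0 hq1 hq0 hq1.le m).ne',
      ENNReal.ofReal_sum_of_nonneg fun p _ =>
        mul_nonneg (qNegBinomialMass_nonneg ha0 ha1 hq0 hq1.le N p.1) (hstep_nonneg p.2)]
    exact sum_congr rfl fun p _ => by
      rw [ih, hdist, ENNReal.ofReal_mul (qNegBinomialMass_nonneg ha0 ha1 hq0 hq1.le N p.1)]

lemma ae_eventually_eq_zero_of_summable [IsProbabilityMeasure μ] {G : ℕ → Ω → ℕ}
    (hmeas : ∀ n, Measurable (G n)) {p : ℕ → ℝ} (hp0 : ∀ n, 0 ≤ p n) (hp : Summable p)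
    (hG0 : ∀ n, μ {ω | G n ω = 0} = ENNReal.ofReal (1 - p n)) :
    ∀ᵐ ω ∂μ, ∀ᶠ n in atTop, G n ω = 0 := by
  have hle : ∀ n, μ {ω | G n ω = 0}ᶜ ≤ ENNReal.ofReal (p n) := fun n => by
    have hms : MeasurableSet {ω | G n ω = 0} := hmeas n (measurableSet_singleton 0)
    rw [prob_compl_eq_one_sub hms, hG0, tsub_le_iff_right, ← ENNReal.ofReal_one]
    exact (ENNReal.ofReal_le_ofReal (by linarith)).trans ENNReal.ofReal_add_le
  have hfin : ∑' n, μ {ω | G n ω = 0}ᶜ ≠ ⊤ :=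
    ne_top_of_le_ne_top (ENNReal.ofReal_tsum_of_nonneg hp0 hp ▸ ENNReal.ofReal_ne_top)
      (ENNReal.tsum_le_tsum hle)
  filter_upwards [ae_eventually_notMem hfin] with ω hω
  simpa using hω

lemma tendsto_measure_sum_range_eq [IsFiniteMeasure μ] {G : ℕ → Ω → ℕ}
    (hmeas : ∀ n, Measurable (G n)) (hG0 : ∀ᵐ ω ∂μ, ∀ᶠ n in atTop, G n ω = 0) (m : ℕ) :
    Tendsto (fun N => μ {ω | ∑ n ∈ range N, G n ω = m}) atTop
      (𝓝 (μ {ω | ∑' n, (G n ω : ℝ) = m})) := by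
  have hS : Measurable fun ω => ∑' n, (G n ω : ℝ) :=
    Measurable.tsum fun n => measurable_from_nat.comp (hmeas n)
  refine tendsto_measure_of_ae_tendsto_indicator_of_isFiniteMeasure _
    (hS (measurableSet_singleton _))
    (fun N => measurable_sum _ (fun n _ => hmeas n) (measurableSet_singleton m)) ?_
  filter_upwards [hG0] with ω hω
  have hcast : ∀ᶠ n in atTop, (G n ω : ℝ) = 0 := hω.mono fun n hn => by simp [hn]
  filter_upwards [eventually_hasSum_sum_range hcast] with N hN
  simp only [hN.tsum_eq, ← Nat.cast_sum, Nat.cast_inj]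

end Probability

/-- If `(G_{a q^n})_n` are independent geometric random variables with
`P(G_p = k) = (1-p) p^k`, then `S = ∑ G_{a q^n}` is a.s. finite and
`R = (1-q)^{-1} q^S` satisfies `P(R = (1-q)^{-1} q^m) = a^m (a;q)_∞ / (q;q)_m`. -/
theorem qGamma_law_of_geometric_sums
    {Ω : Type*} [MeasureSpace Ω] [IsProbabilityMeasure (ℙ : Measure Ω)]
    (q a : ℝ) (hq0 : 0 < q) (hq1 : q < 1) (ha0 : 0 ≤ a) (ha1 : a < 1)
    (G : ℕ → Ω → ℕ) (hmeas : ∀ n, Measurable (G n))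
    (hindep : iIndepFun G ℙ)
    (hdist : ∀ n k, ℙ {ω | G n ω = k}
      = ENNReal.ofReal ((1 - a * q ^ n) * (a * q ^ n) ^ k)) :
    (∀ᵐ ω ∂ℙ, Summable (fun n => (G n ω : ℝ))) ∧
    ∀ m : ℕ,
      ℙ {ω | (1 - q)⁻¹ * q ^ (∑' n : ℕ, (G n ω : ℝ)) = (1 - q)⁻¹ * q ^ (m : ℝ)}
        = ENNReal.ofReal (a ^ m * qPochInf a q / qPoch q q m) := by
  have habs : |q| < 1 := abs_lt.2 ⟨by linarith, hq1⟩
  have hG0 : ∀ᵐ ω ∂ℙ, ∀ᶠ n in atTop, G n ω = 0 :=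
    ae_eventually_eq_zero_of_summable hmeas (fun n => by positivity)
      ((summable_geometric_of_lt_one hq0.le hq1).mul_left a) fun n => by simp [hdist]
  refine ⟨hG0.mono fun ω hω => ?_, fun m => ?_⟩
  · obtain ⟨N, hN⟩ := (eventually_hasSum_sum_range (f := fun n => (G n ω : ℝ))
      (hω.mono fun n hn => by simp [hn])).exists
    exact hN.summable
  have hevent : {ω | (1 - q)⁻¹ * q ^ (∑' n : ℕ, (G n ω : ℝ)) = (1 - q)⁻¹ * q ^ (m : ℝ)}
      = {ω | ∑' n : ℕ, (G n ω : ℝ) = m} := by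
    ext ω
    simp only [Set.mem_ofPred_eq, mul_right_inj' (inv_ne_zero (sub_ne_zero.2 hq1.ne')),
      Real.rpow_right_inj hq0 hq1.ne]
  have hlaw : Tendsto (fun N => ℙ {ω | ∑ n ∈ range N, G n ω = m}) atTop
      (𝓝 (ENNReal.ofReal (a ^ m * qPochInf a q / qPoch q q m))) := by
    simp_rw [measure_sum_range_eq_qNegBinomialMass hq0.le hq1 ha0 ha1.le hmeas hindep hdist]
    exact ENNReal.tendsto_ofReal (tendsto_qNegBinomialMass a habs m)
  rw [hevent]
  exact tendsto_nhds_unique (tendsto_measure_sum_range_eq hmeas hG0 m) hlaw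
end

section
/- q-binomial theorem: for complex x, z, q with |q| < 1 and |z| < 1, (xz;q)_∞ / (z;q)_∞ = Σ_{n=0}^∞ ((x;q)_n / (q;q)_n) z^n, where (a;q)_n = Π_{j=0}^{n-1}(1 - a q^j) and (a;q)_∞ = Π_{j=0}^∞ (1 - a q^j). -/
/-!
With `c n = (x;q)_n / (q;q)_n` and `F w = ∑ c n w^n`, the recurrence
`(1 - q^(n+1)) c (n+1) = (1 - x q^n) c n` is, coefficient by coefficient, the functional equation
`(1 - w) F w = (1 - x w) F (q w)`. Iterating it gives `(w;q)_N F w = (xw;q)_N F (q^N w)`, and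
letting `N → ∞` (so that `q^N w → 0` and `F 0 = 1`) yields `(w;q)_∞ F w = (xw;q)_∞`.
-/

/-- The finite complex q-Pochhammer symbol `(a;q)_n = ∏_{j=0}^{n-1} (1 - a q^j)`. -/
noncomputable def qPochC (a q : ℂ) (n : ℕ) : ℂ := ∏ j ∈ Finset.range n, (1 - a * q ^ j)

/-- The infinite complex q-Pochhammer symbol `(a;q)_∞ = ∏_{j=0}^∞ (1 - a q^j)`. -/
noncomputable def qPochInfC (a q : ℂ) : ℂ := ∏' j : ℕ, (1 - a * q ^ j)

open Filter Topology Metric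

section Pochhammer

variable {q : ℂ}

theorem qPochC_succ (a : ℂ) (n : ℕ) : qPochC a q (n + 1) = qPochC a q n * (1 - a * q ^ n) :=
  Finset.prod_range_succ _ n

theorem norm_pow_mul_le (hq : ‖q‖ ≤ 1) (n : ℕ) (w : ℂ) : ‖q ^ n * w‖ ≤ ‖w‖ := by
  rw [norm_mul, norm_pow]
  exact mul_le_of_le_one_left (norm_nonneg w) (pow_le_one₀ (norm_nonneg q) hq)

theorem one_sub_mul_pow_ne_zero {a : ℂ} (ha : ‖a‖ < 1) (hq : ‖q‖ ≤ 1) (j : ℕ) :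
    1 - a * q ^ j ≠ 0 := by
  intro h
  have h1 : ‖q ^ j * a‖ < 1 := (norm_pow_mul_le hq j a).trans_lt ha
  rw [mul_comm, ← sub_eq_zero.1 h, norm_one] at h1
  exact lt_irrefl _ h1

theorem qPochC_ne_zero {a : ℂ} (ha : ‖a‖ < 1) (hq : ‖q‖ ≤ 1) (n : ℕ) :
    qPochC a q n ≠ 0 :=
  Finset.prod_ne_zero_iff.2 fun j _ => one_sub_mul_pow_ne_zero ha hq j

theorem summable_norm_mul_pow (a : ℂ) (hq : ‖q‖ < 1) :
    Summable fun j : ℕ => ‖a * q ^ j‖ := by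
  simpa [norm_mul, norm_pow] using
    (summable_geometric_of_lt_one (norm_nonneg q) hq).mul_left ‖a‖

theorem tendsto_qPochC_qPochInfC (a : ℂ) (hq : ‖q‖ < 1) :
    Tendsto (qPochC a q) atTop (𝓝 (qPochInfC a q)) := by
  have h : Multipliable fun j : ℕ => 1 - a * q ^ j := by
    simpa [sub_eq_add_neg] using multipliable_one_add_of_summable (f := fun j => -(a * q ^ j))
      (by simpa using summable_norm_mul_pow a hq)
  exact h.hasProd.tendsto_prod_nat

theorem qPochInfC_ne_zero {a : ℂ} (ha : ‖a‖ < 1) (hq : ‖q‖ < 1) : qPochInfC a q ≠ 0 := by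
  rw [qPochInfC]
  simpa [sub_eq_add_neg] using tprod_one_add_ne_zero_of_summable (f := fun j => -(a * q ^ j))
    (fun j => by simpa [sub_eq_add_neg] using one_sub_mul_pow_ne_zero ha hq.le j)
    (by simpa using summable_norm_mul_pow a hq)

end Pochhammer

theorem summable_norm_mul_pow_of_norm_succ_le {E : Type*} [SeminormedAddCommGroup E]
    {c : ℕ → E} {ρ : ℕ → ℝ} (hρ : Tendsto ρ atTop (𝓝 1)) (hc : ∀ n, ‖c (n + 1)‖ ≤ ρ n * ‖c n‖)
    {r : ℝ} (hr0 : 0 ≤ r) (hr : r < 1) : Summable fun n => ‖c n‖ * r ^ n := by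
  have hρr : ∀ᶠ n in atTop, ρ n * r ≤ (1 + r) / 2 :=
    (by simpa using hρ.mul_const r : Tendsto (fun n => ρ n * r) atTop (𝓝 r)).eventually_le_const
      (by linarith)
  refine summable_of_ratio_norm_eventually_le (r := (1 + r) / 2) (by linarith) ?_
  filter_upwards [hρr] with n hn
  rw [Real.norm_of_nonneg (by positivity), Real.norm_of_nonneg (by positivity)]
  calc ‖c (n + 1)‖ * r ^ (n + 1) ≤ ρ n * ‖c n‖ * r ^ (n + 1) := by gcongr; exact hc n
    _ = ρ n * r * (‖c n‖ * r ^ n) := by ring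
    _ ≤ (1 + r) / 2 * (‖c n‖ * r ^ n) := by gcongr

noncomputable def qBinomialCoeff (x q : ℂ) (n : ℕ) : ℂ := qPochC x q n / qPochC q q n

noncomputable def qBinomialSeries (x q w : ℂ) : ℂ := ∑' n : ℕ, qBinomialCoeff x q n * w ^ n

section qBinomial

variable {x q : ℂ}

theorem qBinomialCoeff_zero : qBinomialCoeff x q 0 = 1 := by
  simp [qBinomialCoeff, qPochC]

theorem qBinomialCoeff_succ (hq : ‖q‖ < 1) (n : ℕ) :
    (1 - q ^ (n + 1)) * qBinomialCoeff x q (n + 1) = (1 - x * q ^ n) * qBinomialCoeff x q n := by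
  have h1 := qPochC_ne_zero hq hq.le n
  have h2 := one_sub_mul_pow_ne_zero hq hq.le n
  rw [qBinomialCoeff, qBinomialCoeff, qPochC_succ, qPochC_succ, pow_succ']
  field_simp

theorem summable_norm_qBinomialCoeff_mul_pow (x : ℂ) (hq : ‖q‖ < 1) {r : ℝ} (hr0 : 0 ≤ r)
    (hr : r < 1) : Summable fun n => ‖qBinomialCoeff x q n‖ * r ^ n := by
  refine summable_norm_mul_pow_of_norm_succ_le
    (ρ := fun n => ‖1 - x * q ^ n‖ / ‖1 - q ^ (n + 1)‖) ?_ (fun n => ?_) hr0 hr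
  · have hpow := tendsto_pow_atTop_nhds_zero_of_norm_lt_one hq
    have hnum : Tendsto (fun n : ℕ => ‖1 - x * q ^ n‖) atTop (𝓝 1) := by
      simpa using ((hpow.const_mul x).const_sub 1).norm
    have hden : Tendsto (fun n : ℕ => ‖1 - q ^ (n + 1)‖) atTop (𝓝 1) := by
      simpa using (((tendsto_add_atTop_iff_nat 1).2 hpow).const_sub 1).norm
    simpa only [div_one, Pi.div_def] using hnum.div hden one_ne_zero
  · have hpos : 0 < ‖1 - q ^ (n + 1)‖ := by
      simpa [pow_succ'] using one_sub_mul_pow_ne_zero hq hq.le n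
    rw [div_mul_eq_mul_div, le_div_iff₀' hpos, ← norm_mul, ← norm_mul, qBinomialCoeff_succ hq]

theorem summable_qBinomialCoeff_mul_pow (hq : ‖q‖ < 1) {w : ℂ} (hw : ‖w‖ < 1) :
    Summable fun n => qBinomialCoeff x q n * w ^ n :=
  (summable_norm_qBinomialCoeff_mul_pow x hq (norm_nonneg w) hw).of_norm_bounded fun n => by
    rw [norm_mul, norm_pow]

theorem qBinomialSeries_zero : qBinomialSeries x q 0 = 1 := by
  rw [qBinomialSeries, tsum_eq_single 0 fun n hn => by simp [hn]]
  simp [qBinomialCoeff_zero]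

theorem continuousAt_qBinomialSeries_zero (hq : ‖q‖ < 1) :
    ContinuousAt (qBinomialSeries x q) 0 := by
  have h : ContinuousOn (qBinomialSeries x q) (closedBall 0 (1 / 2)) :=
    continuousOn_tsum (fun n => by fun_prop)
      (summable_norm_qBinomialCoeff_mul_pow x hq (r := 1 / 2) (by norm_num) (by norm_num))
      fun n w hw => by
        rw [norm_mul, norm_pow]
        gcongr
        simpa using hw
  exact h.continuousAt (closedBall_mem_nhds 0 (by norm_num))

theorem qBinomialSeries_functional_eq (hq : ‖q‖ < 1) {w : ℂ} (hw : ‖w‖ < 1) :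
    (1 - w) * qBinomialSeries x q w = (1 - x * w) * qBinomialSeries x q (q * w) := by
  set c := qBinomialCoeff x q
  have hqw : ‖q * w‖ < 1 := by simpa using (norm_pow_mul_le hq.le 1 w).trans_lt hw
  have hS := summable_qBinomialCoeff_mul_pow (x := x) hq hw
  have hS' := summable_qBinomialCoeff_mul_pow (x := x) hq hqw
  have hdiff : qBinomialSeries x q w - qBinomialSeries x q (q * w)
      = ∑' n : ℕ, (1 - q ^ (n + 1)) * c (n + 1) * w ^ (n + 1) := by
    rw [qBinomialSeries, qBinomialSeries, ← hS.tsum_sub hS', (hS.sub hS').tsum_eq_zero_add]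
    simp only [pow_zero, mul_one, sub_self, zero_add, mul_pow]
    exact tsum_congr fun n => by ring
  have hshift : w * (qBinomialSeries x q w - x * qBinomialSeries x q (q * w))
      = ∑' n : ℕ, (1 - x * q ^ n) * c n * w ^ (n + 1) := by
    rw [qBinomialSeries, qBinomialSeries, ← hS'.tsum_mul_left, ← hS.tsum_sub (hS'.mul_left x),
      ← (hS.sub (hS'.mul_left x)).tsum_mul_left]
    exact tsum_congr fun n => by rw [mul_pow]; ring
  have key : qBinomialSeries x q w - qBinomialSeries x q (q * w)
      = w * (qBinomialSeries x q w - x * qBinomialSeries x q (q * w)) := by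
    rw [hdiff, hshift]
    exact tsum_congr fun n => by rw [qBinomialCoeff_succ hq]
  linear_combination key

theorem qPochC_mul_qBinomialSeries (hq : ‖q‖ < 1) {w : ℂ} (hw : ‖w‖ < 1) (N : ℕ) :
    qPochC w q N * qBinomialSeries x q w
      = qPochC (x * w) q N * qBinomialSeries x q (q ^ N * w) := by
  induction N with
  | zero => simp [qPochC]
  | succ N ih =>
    have hN : ‖q ^ N * w‖ < 1 := (norm_pow_mul_le hq.le N w).trans_lt hw
    calc qPochC w q (N + 1) * qBinomialSeries x q w
        = qPochC (x * w) q N * ((1 - q ^ N * w) * qBinomialSeries x q (q ^ N * w)) := by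
          rw [qPochC_succ, mul_right_comm, ih]; ring
      _ = qPochC (x * w) q N * ((1 - x * (q ^ N * w)) * qBinomialSeries x q (q * (q ^ N * w))) := by
          rw [qBinomialSeries_functional_eq hq hN]
      _ = qPochC (x * w) q (N + 1) * qBinomialSeries x q (q ^ (N + 1) * w) := by
          rw [qPochC_succ, pow_succ', mul_assoc q]; ring

end qBinomial

/-- The q-binomial theorem: for `|q| < 1` and `|z| < 1`,
`(xz;q)_∞ / (z;q)_∞ = ∑_{n=0}^∞ ((x;q)_n / (q;q)_n) z^n`. -/
theorem q_binomial_theorem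
    (x z q : ℂ) (hq : ‖q‖ < 1) (hz : ‖z‖ < 1) :
    qPochInfC (x * z) q / qPochInfC z q
      = ∑' n : ℕ, (qPochC x q n / qPochC q q n) * z ^ n := by
  have hlim : Tendsto (fun N => qPochC z q N * qBinomialSeries x q z) atTop
      (𝓝 (qPochInfC (x * z) q * 1)) := by
    simp_rw [qPochC_mul_qBinomialSeries hq hz]
    refine (tendsto_qPochC_qPochInfC (x * z) hq).mul ?_
    rw [← qBinomialSeries_zero (x := x) (q := q)]
    exact (continuousAt_qBinomialSeries_zero hq).tendsto.comp
      (by simpa using (tendsto_pow_atTop_nhds_zero_of_norm_lt_one hq).mul_const z)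
  have h := tendsto_nhds_unique ((tendsto_qPochC_qPochInfC z hq).mul_const _) hlim
  rw [mul_one] at h
  rw [← h, mul_div_cancel_left₀ _ (qPochInfC_ne_zero hz hq)]
  rfl
end
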